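/- arXiv:1508.05987 — 5 statements merged into one kernel-verified Lean document; each statement's English description precedes it below -/
import Mathlib

section
/- Let g : ℝⁿ → ℝ be defined by g(α) = -⟨y, α⟩ + (1/2)αᵀKα + 2λ·Σᵢ φ*_ω(αᵢ), where K is symmetric positive semidefinite, λ > 0, ω ∈ (0,1), and φ*_ω(t) = t²/(4(1-ω)) for t ≤ 0 and t²/(4ω) for t > 0. If ĝ' (the gradient of g) vanishes at α̂, then for all α ∈ ℝⁿ: (1/2)(α-α̂)ᵀK(α-α̂) + (λ/(2·max(1-ω,ω)))‖α-α̂‖² ≤ g(α) - g(α̂) ≤ (1/2)(α-α̂)ᵀK(α-α̂) + (λ/(2·min(1-ω,ω)))‖α-α̂‖². -/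
/-!
At a stationary point α̂ the first-order term of the expansion of g vanishes, so with h = α - α̂
the increment g(α) - g(α̂) is ½ hᵀKh plus 2λ times the sum of the Bregman divergences of φ*_ω
between αᵢ and α̂ᵢ. Since φ*_ω is quadratic on each half-line, with leading coefficients
1/(4(1-ω)) and 1/(4ω), its Bregman divergence at (a, b) splits (a - b)² into two nonnegative parts
weighted by these coefficients, which gives both bounds.

That the first-order term vanishes is seen on the line t ↦ α̂ + t h: there the same bounds make the
remainder O(t²), so the first-order coefficient is the derivative of g along the line, which is 0.
-/

open Matrix

/-- Convex conjugate of the asymmetric squared loss. -/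
noncomputable def phiStar (ω t : ℝ) : ℝ :=
  if t ≤ 0 then t ^ 2 / (4 * (1 - ω)) else t ^ 2 / (4 * ω)

open Asymptotics in
theorem hasDerivAt_of_norm_sub_le_mul_sq {𝕜 F : Type*} [NontriviallyNormedField 𝕜]
    [NormedAddCommGroup F] [NormedSpace 𝕜 F] {f : 𝕜 → F} {f' : F} {x₀ : 𝕜} (C : ℝ)
    (h : ∀ x, ‖f x - f x₀ - (x - x₀) • f'‖ ≤ C * ‖x - x₀‖ ^ 2) : HasDerivAt f f' x₀ := by
  rw [hasDerivAt_iff_isLittleO]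
  refine IsBigO.trans_isLittleO (IsBigO.of_bound C (.of_forall fun x => ?_))
    (isLittleO_pow_sub_sub x₀ one_lt_two)
  simpa only [norm_pow, norm_norm] using h x

theorem sandwich_of_fderiv_eq_zero {E : Type*} [NormedAddCommGroup E] [NormedSpace ℝ E]
    {f : E → ℝ} {x₀ : E} (hf : DifferentiableAt ℝ f x₀) (hstat : fderiv ℝ f x₀ = 0)
    {ℓ : E →ₗ[ℝ] ℝ} {q₁ q₂ : E → ℝ} (hq₁ : ∀ (t : ℝ) h, q₁ (t • h) = t ^ 2 * q₁ h)
    (hq₂ : ∀ (t : ℝ) h, q₂ (t • h) = t ^ 2 * q₂ h)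
    (hlow : ∀ h, q₁ h ≤ f (x₀ + h) - f x₀ - ℓ h) (hup : ∀ h, f (x₀ + h) - f x₀ - ℓ h ≤ q₂ h)
    (h : E) : q₁ h ≤ f (x₀ + h) - f x₀ ∧ f (x₀ + h) - f x₀ ≤ q₂ h := by
  suffices hℓ : ℓ h = 0 by
    simpa only [hℓ, sub_zero] using And.intro (hlow h) (hup h)
  have hline : HasDerivAt (fun t : ℝ => f (x₀ + t • h)) 0 0 := by
    have hx : HasDerivAt (fun t : ℝ => x₀ + t • h) h 0 := by
      simpa using ((hasDerivAt_id (0 : ℝ)).smul_const h).const_add x₀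
    have := hf.hasFDerivAt.comp_hasDerivAt_of_eq (0 : ℝ) hx (by simp)
    rwa [hstat] at this
  refine (hasDerivAt_of_norm_sub_le_mul_sq (|q₁ h| + |q₂ h|) fun t => ?_).unique hline
  have h₁ := hlow (t • h)
  have h₂ := hup (t • h)
  rw [hq₁, map_smul, smul_eq_mul] at h₁
  rw [hq₂, map_smul, smul_eq_mul] at h₂
  simp only [zero_smul, add_zero, sub_zero, smul_eq_mul, Real.norm_eq_abs, sq_abs]
  rw [abs_le]
  constructor <;> nlinarith [neg_abs_le (q₁ h), le_abs_self (q₂ h), abs_nonneg (q₁ h),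
    abs_nonneg (q₂ h), sq_nonneg t]

noncomputable def phiStarDeriv (ω t : ℝ) : ℝ :=
  if t ≤ 0 then t / (2 * (1 - ω)) else t / (2 * ω)

def bregmanDiv (f f' : ℝ → ℝ) (a b : ℝ) : ℝ :=
  f a - f b - f' b * (a - b)

theorem add_div_max_le_add_div {A B p q : ℝ} (hA : 0 ≤ A) (hB : 0 ≤ B) (hp : 0 < p)
    (hq : 0 < q) :
    (A + B) / max p q ≤ A / p + B / q := by
  rw [add_div]
  exact add_le_add (div_le_div_of_nonneg_left hA hp (le_max_left p q))
    (div_le_div_of_nonneg_left hB hq (le_max_right p q))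

theorem add_div_le_add_div_min {A B p q : ℝ} (hA : 0 ≤ A) (hB : 0 ≤ B) (hp : 0 < p)
    (hq : 0 < q) :
    A / p + B / q ≤ (A + B) / min p q := by
  rw [add_div]
  exact add_le_add (div_le_div_of_nonneg_left hA (lt_min hp hq) (min_le_left p q))
    (div_le_div_of_nonneg_left hB (lt_min hp hq) (min_le_right p q))

theorem exists_phiStar_bregmanDiv_eq {ω : ℝ} (hω : ω ∈ Set.Ioo (0 : ℝ) 1) (a b : ℝ) :
    ∃ A B, 0 ≤ A ∧ 0 ≤ B ∧ A + B = (a - b) ^ 2 ∧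
      4 * bregmanDiv (phiStar ω) (phiStarDeriv ω) a b = A / (1 - ω) + B / ω := by
  have hω₀ : ω ≠ 0 := hω.1.ne'
  have hω₁ : 1 - ω ≠ 0 := (sub_pos.2 hω.2).ne'
  simp only [bregmanDiv, phiStar, phiStarDeriv]
  rcases le_or_gt a 0 with ha | ha <;> rcases le_or_gt b 0 with hb | hb
  · refine ⟨(a - b) ^ 2, 0, by positivity, le_rfl, add_zero _, ?_⟩
    simp only [if_pos ha, if_pos hb]; field_simp; ring
  · refine ⟨a ^ 2, b ^ 2 - 2 * a * b, by positivity, by nlinarith, by ring, ?_⟩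
    simp only [if_pos ha, if_neg hb.not_ge]; field_simp; ring
  · refine ⟨b ^ 2 - 2 * a * b, a ^ 2, by nlinarith, by positivity, by ring, ?_⟩
    simp only [if_neg ha.not_ge, if_pos hb]; field_simp; ring
  · refine ⟨0, (a - b) ^ 2, le_rfl, by positivity, zero_add _, ?_⟩
    simp only [if_neg ha.not_ge, if_neg hb.not_ge]; field_simp; ring

theorem phiStar_bregmanDiv_bounds {ω : ℝ} (hω : ω ∈ Set.Ioo (0 : ℝ) 1) (a b : ℝ) :
    (a - b) ^ 2 / (4 * max (1 - ω) ω) ≤ bregmanDiv (phiStar ω) (phiStarDeriv ω) a b ∧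
      bregmanDiv (phiStar ω) (phiStarDeriv ω) a b ≤ (a - b) ^ 2 / (4 * min (1 - ω) ω) := by
  obtain ⟨A, B, hA, hB, hAB, hD⟩ := exists_phiStar_bregmanDiv_eq hω a b
  have hlow := add_div_max_le_add_div hA hB (sub_pos.2 hω.2) hω.1
  have hup := add_div_le_add_div_min hA hB (sub_pos.2 hω.2) hω.1
  rw [← hAB, mul_comm 4, mul_comm 4, ← div_div, ← div_div]
  constructor <;> linarith

theorem hasDerivAt_phiStar {ω : ℝ} (hω : ω ∈ Set.Ioo (0 : ℝ) 1) (t : ℝ) :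
    HasDerivAt (phiStar ω) (phiStarDeriv ω t) t := by
  refine hasDerivAt_of_norm_sub_le_mul_sq (4 * min (1 - ω) ω)⁻¹ fun x => ?_
  obtain ⟨hlow, hup⟩ := phiStar_bregmanDiv_bounds hω x t
  have hmin : 0 < min (1 - ω) ω := lt_min (sub_pos.2 hω.2) hω.1
  have hmax : 0 < max (1 - ω) ω := lt_max_of_lt_right hω.1
  have hD : 0 ≤ bregmanDiv (phiStar ω) (phiStarDeriv ω) x t := by
    refine le_trans ?_ hlow; positivity
  have hC : 0 ≤ (4 * min (1 - ω) ω)⁻¹ * (x - t) ^ 2 := by positivity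
  rw [div_eq_inv_mul] at hup
  rw [Real.norm_eq_abs, Real.norm_eq_abs, sq_abs, smul_eq_mul, mul_comm (x - t), abs_le]
  unfold bregmanDiv at hD hup
  constructor <;> linarith

noncomputable def dualObjective {ι : Type*} [Fintype ι] (y : ι → ℝ) (K : Matrix ι ι ℝ) (c : ℝ)
    (φ : ℝ → ℝ) (α : ι → ℝ) : ℝ :=
  -(y ⬝ᵥ α) + 1 / 2 * (α ⬝ᵥ K *ᵥ α) + c * ∑ i, φ (α i)

noncomputable def dualGradient {ι : Type*} [Fintype ι] (y : ι → ℝ) (K : Matrix ι ι ℝ) (c : ℝ)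
    (φ' : ℝ → ℝ) (α : ι → ℝ) : ι → ℝ :=
  -y + (1 / 2 : ℝ) • (α ᵥ* K + K *ᵥ α) + c • fun i => φ' (α i)

section dualObjective

variable {ι : Type*} [Fintype ι] (y : ι → ℝ) (K : Matrix ι ι ℝ) (c : ℝ)

theorem differentiable_dualObjective {φ : ℝ → ℝ} (hφ : Differentiable ℝ φ) :
    Differentiable ℝ (dualObjective y K c φ) := by
  unfold dualObjective
  simp only [dotProduct, mulVec]
  fun_prop

theorem dualObjective_add_sub_dualGradient (φ φ' : ℝ → ℝ) (α h : ι → ℝ) :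
    dualObjective y K c φ (α + h) - dualObjective y K c φ α
        - dualGradient y K c φ' α ⬝ᵥ h
      = 1 / 2 * (h ⬝ᵥ K *ᵥ h) + c * ∑ i, bregmanDiv φ φ' (α i + h i) (α i) := by
  have hquad : (α + h) ⬝ᵥ K *ᵥ (α + h)
      = α ⬝ᵥ K *ᵥ α + (α ᵥ* K) ⬝ᵥ h + (K *ᵥ α) ⬝ᵥ h + h ⬝ᵥ K *ᵥ h := by
    rw [mulVec_add, dotProduct_add, add_dotProduct, add_dotProduct, dotProduct_mulVec α K h,
      dotProduct_comm h (K *ᵥ α)]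
    ring
  have hsum : ∑ i, bregmanDiv φ φ' (α i + h i) (α i)
      = ∑ i, φ (α i + h i) - ∑ i, φ (α i) - (fun i => φ' (α i)) ⬝ᵥ h := by
    simp only [bregmanDiv, add_sub_cancel_left, Finset.sum_sub_distrib, dotProduct]
  simp only [dualObjective, dualGradient, hquad, hsum, Pi.add_apply, dotProduct_add,
    add_dotProduct, neg_dotProduct, smul_dotProduct, smul_eq_mul]
  ring

theorem dotProduct_mulVec_add_sum_sq_smul (κ t : ℝ) (h : ι → ℝ) :
    1 / 2 * ((t • h) ⬝ᵥ K *ᵥ (t • h)) + κ * ∑ i, (t • h) i ^ 2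
      = t ^ 2 * (1 / 2 * (h ⬝ᵥ K *ᵥ h) + κ * ∑ i, h i ^ 2) := by
  simp only [mulVec_smul, dotProduct_smul, smul_dotProduct, smul_eq_mul, Pi.smul_apply, mul_pow,
    ← Finset.mul_sum]
  ring

theorem dualObjective_phiStar_remainder_bounds {lam ω : ℝ} (hlam : 0 ≤ lam)
    (hω : ω ∈ Set.Ioo (0 : ℝ) 1) (α h : ι → ℝ) :
    1 / 2 * (h ⬝ᵥ K *ᵥ h) + lam / (2 * max (1 - ω) ω) * ∑ i, h i ^ 2
        ≤ dualObjective y K (2 * lam) (phiStar ω) (α + h)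
          - dualObjective y K (2 * lam) (phiStar ω) α
          - dualGradient y K (2 * lam) (phiStarDeriv ω) α ⬝ᵥ h ∧
      dualObjective y K (2 * lam) (phiStar ω) (α + h)
          - dualObjective y K (2 * lam) (phiStar ω) α
          - dualGradient y K (2 * lam) (phiStarDeriv ω) α ⬝ᵥ h
        ≤ 1 / 2 * (h ⬝ᵥ K *ᵥ h) + lam / (2 * min (1 - ω) ω) * ∑ i, h i ^ 2 := by
  have hdiv := fun i => phiStar_bregmanDiv_bounds hω (α i + h i) (α i)
  simp only [add_sub_cancel_left] at hdiv
  have hlow := Finset.sum_le_sum fun i (_ : i ∈ Finset.univ) => (hdiv i).1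
  have hup := Finset.sum_le_sum fun i (_ : i ∈ Finset.univ) => (hdiv i).2
  rw [← Finset.sum_div] at hlow hup
  rw [dualObjective_add_sub_dualGradient]
  have e (μ : ℝ) : lam / (2 * μ) * ∑ i, h i ^ 2 = 2 * lam * ((∑ i, h i ^ 2) / (4 * μ)) := by
    ring
  rw [e, e]
  constructor <;> gcongr

end dualObjective

theorem dual_objective_sandwich_general {n : ℕ} (y : Fin n → ℝ) (K : Matrix (Fin n) (Fin n) ℝ)
    (lam ω : ℝ) (hlam : 0 < lam) (hω : ω ∈ Set.Ioo (0 : ℝ) 1)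
    (g : (Fin n → ℝ) → ℝ)
    (hg : ∀ α : Fin n → ℝ,
      g α = -(y ⬝ᵥ α) + (1 / 2) * (α ⬝ᵥ K.mulVec α) + 2 * lam * ∑ i, phiStar ω (α i))
    (αhat : Fin n → ℝ) (hstat : fderiv ℝ g αhat = 0) :
    ∀ α : Fin n → ℝ,
      (1 / 2) * ((α - αhat) ⬝ᵥ K.mulVec (α - αhat))
          + lam / (2 * max (1 - ω) ω) * ∑ i, (α i - αhat i) ^ 2
        ≤ g α - g αhat ∧
      g α - g αhat
        ≤ (1 / 2) * ((α - αhat) ⬝ᵥ K.mulVec (α - αhat))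
          + lam / (2 * min (1 - ω) ω) * ∑ i, (α i - αhat i) ^ 2 := by
  obtain rfl : g = dualObjective y K (2 * lam) (phiStar ω) := funext hg
  have hdiff := differentiable_dualObjective y K (2 * lam)
    fun t => (hasDerivAt_phiStar hω t).differentiableAt
  have hrem := dualObjective_phiStar_remainder_bounds y K hlam.le hω αhat
  intro α
  simpa only [add_sub_cancel, Pi.sub_apply] using
    sandwich_of_fderiv_eq_zero (hdiff αhat) hstat
      (ℓ := dotProductBilin ℝ ℝ (dualGradient y K (2 * lam) (phiStarDeriv ω) αhat))
      (dotProduct_mulVec_add_sum_sq_smul K _) (dotProduct_mulVec_add_sum_sq_smul K _)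
      (fun h => (hrem h).1) (fun h => (hrem h).2) (α - αhat)

theorem dual_objective_sandwich {n : ℕ} (y : Fin n → ℝ) (K : Matrix (Fin n) (Fin n) ℝ)
    (hK : K.PosSemidef) (lam ω : ℝ) (hlam : 0 < lam) (hω : ω ∈ Set.Ioo (0 : ℝ) 1)
    (g : (Fin n → ℝ) → ℝ)
    (hg : ∀ α : Fin n → ℝ,
      g α = -(y ⬝ᵥ α) + (1 / 2) * (α ⬝ᵥ K.mulVec α) + 2 * lam * ∑ i, phiStar ω (α i))
    (αhat : Fin n → ℝ) (hstat : fderiv ℝ g αhat = 0) :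
    ∀ α : Fin n → ℝ,
      (1 / 2) * ((α - αhat) ⬝ᵥ K.mulVec (α - αhat))
          + lam / (2 * max (1 - ω) ω) * ∑ i, (α i - αhat i) ^ 2
        ≤ g α - g αhat ∧
      g α - g αhat
        ≤ (1 / 2) * ((α - αhat) ⬝ᵥ K.mulVec (α - αhat))
          + lam / (2 * min (1 - ω) ω) * ∑ i, (α i - αhat i) ^ 2 :=
  dual_objective_sandwich_general y K lam ω hlam hω g hg αhat hstat
end

section
/- Let F : ℝᵐ → ℝ be differentiable, bounded below, with quadratic majorizer Q(α|β) = F(β) + ∇F(β)ᵀ(α-β) + (α-β)ᵀK_u(α-β) satisfying F(α) ≤ Q(α|β) for all α, β, where K_u is symmetric positive definite. If the MM iterates α⁽ᵏ⁺¹⁾ = argmin_α Q(α|α⁽ᵏ⁾) are generated, then ‖α⁽ᵏ⁺¹⁾ - α⁽ᵏ⁾‖ → 0 as k → ∞. -/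
/-!
Put dₖ = α⁽ᵏ⁺¹⁾ - α⁽ᵏ⁾. The update says ∇F(α⁽ᵏ⁾) = -2 K_u dₖ, so the majorizer at the new iterate
is Q(α⁽ᵏ⁺¹⁾|α⁽ᵏ⁾) = F(α⁽ᵏ⁾) - dₖᵀK_u dₖ, i.e. F(α⁽ᵏ⁺¹⁾) + dₖᵀK_u dₖ ≤ F(α⁽ᵏ⁾). As F is bounded
below, the decrements dₖᵀK_u dₖ tend to 0. Writing K_u = BᵀB, this says B dₖ → 0, hence
dₖ = K_u⁻¹Bᵀ(B dₖ) → 0.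
-/

open Matrix Filter Topology

theorem tendsto_zero_of_add_le_of_bddBelow {u e : ℕ → ℝ} (hu : BddBelow (Set.range u))
    (he : ∀ k, 0 ≤ e k) (hdec : ∀ k, u (k + 1) + e k ≤ u k) : Tendsto e atTop (𝓝 0) := by
  have hanti : Antitone u := antitone_nat_of_succ_le fun k => by linarith [hdec k, he k]
  have hu_lim := tendsto_atTop_ciInf hanti hu
  have hgap : Tendsto (fun k => u k - u (k + 1)) atTop (𝓝 0) := by
    simpa using hu_lim.sub (hu_lim.comp (tendsto_add_atTop_nat 1))
  exact squeeze_zero he (fun k => by linarith [hdec k]) hgap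

theorem tendsto_zero_of_dotProduct_self_tendsto_zero {n ι : Type*} [Fintype n] {l : Filter ι}
    {y : ι → n → ℝ} (h : Tendsto (fun i => y i ⬝ᵥ y i) l (𝓝 0)) : Tendsto y l (𝓝 0) := by
  refine tendsto_pi_nhds.2 fun j => squeeze_zero_norm (fun i => Real.abs_le_sqrt ?_)
    (by simpa using h.sqrt)
  rw [sq]
  exact Finset.single_le_sum (f := fun j => y i j * y i j) (fun j _ => mul_self_nonneg _)
    (Finset.mem_univ j)

theorem Matrix.tendsto_mulVec_zero {m n ι : Type*} [Fintype n] (A : Matrix m n ℝ) {l : Filter ι}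
    {x : ι → n → ℝ} (h : Tendsto x l (𝓝 0)) : Tendsto (fun i => A *ᵥ x i) l (𝓝 0) := by
  simpa [Function.comp_def] using
    ((continuous_const.matrix_mulVec continuous_id (A := fun _ => A)).tendsto 0).comp h

open scoped MatrixOrder in
theorem Matrix.PosDef.tendsto_zero_of_dotProduct_mulVec_tendsto_zero {n ι : Type*} [Fintype n]
    [DecidableEq n] {K : Matrix n n ℝ} (hK : K.PosDef) {l : Filter ι} {x : ι → n → ℝ}
    (h : Tendsto (fun i => x i ⬝ᵥ K *ᵥ x i) l (𝓝 0)) : Tendsto x l (𝓝 0) := by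
  have hinv : ∀ v, K⁻¹ *ᵥ (K *ᵥ v) = v := fun v => by
    rw [mulVec_mulVec, nonsing_inv_mul _ ((isUnit_iff_isUnit_det K).1 hK.isUnit), one_mulVec]
  obtain ⟨B, rfl⟩ := CStarAlgebra.nonneg_iff_eq_star_mul_self.mp hK.posSemidef.nonneg
  have hBx : Tendsto (fun i => B *ᵥ x i) l (𝓝 0) := by
    refine tendsto_zero_of_dotProduct_self_tendsto_zero (h.congr fun i => ?_)
    rw [← mulVec_mulVec, dotProduct_mulVec, star_eq_conjTranspose, vecMul_conjTranspose]
    simp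
  have hKx : Tendsto (fun i => (star B * B) *ᵥ x i) l (𝓝 0) := by
    simpa only [← mulVec_mulVec] using (star B).tendsto_mulVec_zero hBx
  simpa only [hinv] using (star B * B)⁻¹.tendsto_mulVec_zero hKx

theorem Matrix.dotProduct_add_dotProduct_mulVec_eq_neg_of_eq_neg_half_inv_mulVec
    {n : Type*} [Fintype n] [DecidableEq n] {K : Matrix n n ℝ} (hK : IsUnit K) {g d : n → ℝ}
    (hd : d = -((1 / 2 : ℝ) • K⁻¹ *ᵥ g)) : g ⬝ᵥ d + d ⬝ᵥ K *ᵥ d = -(d ⬝ᵥ K *ᵥ d) := by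
  have hg : g = (-2 : ℝ) • K *ᵥ d := by
    rw [hd, mulVec_neg, mulVec_smul, mulVec_mulVec,
      mul_nonsing_inv _ ((isUnit_iff_isUnit_det K).1 hK), one_mulVec]
    module
  rw [hg, smul_dotProduct, dotProduct_comm]
  simp only [smul_eq_mul]
  ring

theorem mm_step_to_zero_general {m : ℕ} (F : (Fin m → ℝ) → ℝ)
    (hbdd : ∃ C : ℝ, ∀ α : Fin m → ℝ, C ≤ F α)
    (gradF : (Fin m → ℝ) → (Fin m → ℝ))
    (Ku : Matrix (Fin m) (Fin m) ℝ) (hKu : Ku.PosDef)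
    (Q : (Fin m → ℝ) → (Fin m → ℝ) → ℝ)
    (hQ : ∀ α β : Fin m → ℝ,
      Q α β = F β + gradF β ⬝ᵥ (α - β) + (α - β) ⬝ᵥ Ku.mulVec (α - β))
    (hmaj : ∀ α β : Fin m → ℝ, F α ≤ Q α β)
    (a : ℕ → (Fin m → ℝ))
    (hupd : ∀ k : ℕ, a (k + 1) = a k - (1 / 2 : ℝ) • Ku⁻¹.mulVec (gradF (a k))) :
    Tendsto (fun k : ℕ => Real.sqrt (∑ i, (a (k + 1) i - a k i) ^ 2)) atTop (nhds 0) := by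
  set d : ℕ → Fin m → ℝ := fun k => a (k + 1) - a k
  have hdescent : ∀ k, F (a (k + 1)) + d k ⬝ᵥ Ku *ᵥ d k ≤ F (a k) := fun k => by
    have hstep : d k = -((1 / 2 : ℝ) • Ku⁻¹ *ᵥ gradF (a k)) := by
      simp only [d, hupd k, sub_sub_cancel_left]
    have hmodel : F (a (k + 1)) ≤ F (a k) + (gradF (a k) ⬝ᵥ d k + d k ⬝ᵥ Ku *ᵥ d k) :=
      (hmaj _ _).trans_eq (by rw [hQ, add_assoc])
    rw [dotProduct_add_dotProduct_mulVec_eq_neg_of_eq_neg_half_inv_mulVec hKu.isUnit hstep]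
      at hmodel
    linarith
  obtain ⟨C, hC⟩ := hbdd
  have hquad : Tendsto (fun k => d k ⬝ᵥ Ku *ᵥ d k) atTop (𝓝 0) :=
    tendsto_zero_of_add_le_of_bddBelow ⟨C, Set.forall_mem_range.2 fun k => hC (a k)⟩
      (fun k => by simpa using hKu.posSemidef.dotProduct_mulVec_nonneg (d k)) hdescent
  have hnorm : Continuous fun v : Fin m → ℝ => Real.sqrt (∑ i, v i ^ 2) := by fun_prop
  simpa [d, Function.comp_def] using
    (hnorm.tendsto 0).comp (hKu.tendsto_zero_of_dotProduct_mulVec_tendsto_zero hquad)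

theorem mm_step_to_zero {m : ℕ} (F : (Fin m → ℝ) → ℝ) (hF : Differentiable ℝ F)
    (hbdd : ∃ C : ℝ, ∀ α : Fin m → ℝ, C ≤ F α)
    (gradF : (Fin m → ℝ) → (Fin m → ℝ))
    (hgrad : ∀ β v : Fin m → ℝ, fderiv ℝ F β v = gradF β ⬝ᵥ v)
    (Ku : Matrix (Fin m) (Fin m) ℝ) (hKu : Ku.PosDef)
    (Q : (Fin m → ℝ) → (Fin m → ℝ) → ℝ)
    (hQ : ∀ α β : Fin m → ℝ,
      Q α β = F β + gradF β ⬝ᵥ (α - β) + (α - β) ⬝ᵥ Ku.mulVec (α - β))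
    (hmaj : ∀ α β : Fin m → ℝ, F α ≤ Q α β)
    (a : ℕ → (Fin m → ℝ))
    (hupd : ∀ k : ℕ, a (k + 1) = a k - (1 / 2 : ℝ) • Ku⁻¹.mulVec (gradF (a k))) :
    Tendsto (fun k : ℕ => Real.sqrt (∑ i, (a (k + 1) i - a k i) ^ 2)) atTop (nhds 0) :=
  mm_step_to_zero_general F hbdd gradF Ku hKu Q hQ hmaj a hupd
end

section
/- Let F : ℝᵐ → ℝ be differentiable with unique global minimizer α̂, and suppose for all α, β: F(β) + ∇F(β)ᵀ(α-β) + (α-β)ᵀK_l(α-β) ≤ F(α) ≤ F(β) + ∇F(β)ᵀ(α-β) + (α-β)ᵀK_u(α-β), where K_l, K_u are symmetric positive definite. Define Λ_k = (Q(α̂|α⁽ᵏ⁾) - F(α̂)) / ((α̂-α⁽ᵏ⁾)ᵀK_u(α̂-α⁽ᵏ⁾)) for α⁽ᵏ⁾ ≠ α̂, where Q(α|β) = F(β) + ∇F(β)ᵀ(α-β) + (α-β)ᵀK_u(α-β). Then Λ_k ≤ 1 - γ_min(K_u⁻¹K_l) < 1. -/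
/-!
The lower quadratic bound at `(α̂, α⁽ᵏ⁾)` gives `Q(α̂|α⁽ᵏ⁾) - F(α̂) ≤ dᵀ(K_u - K_l)d` with
`d = α̂ - α⁽ᵏ⁾`, so it suffices that `γ_min K_u ⪯ K_l` in the Loewner order. With `B = K_u^{1/2}`,
this is `γ_min ⪯ B⁻¹K_lB⁻¹`, i.e. `γ_min` bounds the spectrum of `B⁻¹K_lB⁻¹`, which is conjugate
to `K_u⁻¹K_l`. Finally `γ_min > 0`, since an eigenvector `v` gives `vᵀK_lv = γ_min vᵀK_uv`.
-/

open Matrix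
open scoped MatrixOrder

namespace Matrix

variable {n : Type*} [Fintype n] [DecidableEq n]

theorem smul_le_of_forall_le_eigenvalue_inv_mul {Kl Ku : Matrix n n ℝ}
    (hKl : Kl.IsHermitian) (hKu : Ku.PosDef) {c : ℝ}
    (hc : ∀ (μ : ℝ) (v : n → ℝ), v ≠ 0 → (Ku⁻¹ * Kl) *ᵥ v = μ • v → c ≤ μ) :
    c • Ku ≤ Kl := by
  obtain ⟨B, hB, hBB⟩ : ∃ B : Matrix n n ℝ, IsSelfAdjoint B ∧ B * B = Ku :=
    ⟨CFC.sqrt Ku, (CFC.sqrt_nonneg Ku).isSelfAdjoint,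
      CFC.sqrt_mul_sqrt_self Ku hKu.posSemidef.nonneg⟩
  obtain ⟨u, rfl⟩ : IsUnit B := isUnit_mul_self_iff.mp (hBB ▸ hKu.isUnit)
  set C : Matrix n n ℝ := (u : Matrix n n ℝ)⁻¹ with hC
  have hspec : spectrum ℝ (C * Kl * C) = spectrum ℝ (Ku⁻¹ * Kl) := by
    rw [← spectrum.units_conjugate' (u := u), ← hBB, Matrix.mul_inv_rev]
    simp [hC, ← coe_units_inv, mul_assoc]
  have hS : c • 1 ≤ C * Kl * C := by
    have hSadj : IsSelfAdjoint (C * Kl * C) :=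
      hKl.isSelfAdjoint.conjugate_self (IsHermitian.inv hB)
    rw [← Algebra.algebraMap_eq_smul_one, algebraMap_le_iff_le_spectrum hSadj, hspec]
    intro μ hμ
    rw [← spectrum_toLin', ← Module.End.hasEigenvalue_iff_mem_spectrum] at hμ
    obtain ⟨v, hv⟩ := hμ.exists_hasEigenvector
    exact hc μ v hv.2 (by simpa using hv.apply_eq_smul)
  calc c • Ku = u * (c • 1) * u := by simp [← hBB]
    _ ≤ u * (C * Kl * C) * u := hB.conjugate_le_conjugate hS
    _ = Kl := by simp [hC, ← coe_units_inv, mul_assoc]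

theorem PosDef.eigenvalue_inv_mul_pos {Kl Ku : Matrix n n ℝ} (hKl : Kl.PosDef)
    (hKu : Ku.PosDef) {μ : ℝ} {v : n → ℝ} (hv : v ≠ 0) (hμ : (Ku⁻¹ * Kl) *ᵥ v = μ • v) :
    0 < μ := by
  have hKlv : Kl *ᵥ v = μ • Ku *ᵥ v := by
    rw [← mulVec_smul, ← hμ, mulVec_mulVec, ← Matrix.mul_assoc,
      mul_nonsing_inv _ ((isUnit_iff_isUnit_det _).mp hKu.isUnit), Matrix.one_mul]
  have hquad : v ⬝ᵥ Kl *ᵥ v = μ * (v ⬝ᵥ Ku *ᵥ v) := by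
    rw [hKlv, dotProduct_smul, smul_eq_mul]
  have hKlpos := hKl.dotProduct_mulVec_pos hv
  have hKupos := hKu.dotProduct_mulVec_pos hv
  simp only [star_trivial] at hKlpos hKupos
  exact pos_of_mul_pos_left (hquad ▸ hKlpos) hKupos.le

end Matrix

theorem mm_contraction_factor_bound_general {m : ℕ} (F : (Fin m → ℝ) → ℝ)
    (gradF : (Fin m → ℝ) → (Fin m → ℝ))
    (Kl Ku : Matrix (Fin m) (Fin m) ℝ) (hKl : Kl.PosDef) (hKu : Ku.PosDef)
    (hsandwich : ∀ α β : Fin m → ℝ,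
      F β + gradF β ⬝ᵥ (α - β) + (α - β) ⬝ᵥ Kl.mulVec (α - β) ≤ F α ∧
      F α ≤ F β + gradF β ⬝ᵥ (α - β) + (α - β) ⬝ᵥ Ku.mulVec (α - β))
    (αhat : Fin m → ℝ)
    (Q : (Fin m → ℝ) → (Fin m → ℝ) → ℝ)
    (hQ : ∀ α β : Fin m → ℝ,
      Q α β = F β + gradF β ⬝ᵥ (α - β) + (α - β) ⬝ᵥ Ku.mulVec (α - β))
    (γmin : ℝ)
    (hγ : IsLeast {μ : ℝ | ∃ v : Fin m → ℝ, v ≠ 0 ∧ (Ku⁻¹ * Kl).mulVec v = μ • v} γmin)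
    (αk : Fin m → ℝ) (hαk : αk ≠ αhat)
    (Λk : ℝ)
    (hΛ : Λk = (Q αhat αk - F αhat) / ((αhat - αk) ⬝ᵥ Ku.mulVec (αhat - αk))) :
    Λk ≤ 1 - γmin ∧ 1 - γmin < 1 := by
  obtain ⟨⟨v, hv, hγv⟩, hγle⟩ := hγ
  refine ⟨?_, by linarith [hKl.eigenvalue_inv_mul_pos hKu hv hγv]⟩
  set d := αhat - αk
  have hd : 0 < d ⬝ᵥ Ku *ᵥ d := by
    simpa only [star_trivial] using hKu.dotProduct_mulVec_pos (sub_ne_zero.mpr hαk.symm)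
  have hloewner : γmin • Ku ≤ Kl := smul_le_of_forall_le_eigenvalue_inv_mul hKl.isHermitian hKu
    fun μ w hw hμ => hγle ⟨w, hw, hμ⟩
  have hquad : γmin * (d ⬝ᵥ Ku *ᵥ d) ≤ d ⬝ᵥ Kl *ᵥ d := by
    have := (Matrix.le_iff.mp hloewner).dotProduct_mulVec_nonneg d
    simp only [star_trivial, sub_mulVec, smul_mulVec, dotProduct_sub, dotProduct_smul,
      smul_eq_mul] at this
    linarith
  rw [hΛ, hQ, div_le_iff₀ hd]
  linarith [(hsandwich αhat αk).1]

theorem mm_contraction_factor_bound {m : ℕ} (F : (Fin m → ℝ) → ℝ)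
    (hF : Differentiable ℝ F)
    (gradF : (Fin m → ℝ) → (Fin m → ℝ))
    (hgrad : ∀ β v : Fin m → ℝ, fderiv ℝ F β v = gradF β ⬝ᵥ v)
    (Kl Ku : Matrix (Fin m) (Fin m) ℝ) (hKl : Kl.PosDef) (hKu : Ku.PosDef)
    (hsandwich : ∀ α β : Fin m → ℝ,
      F β + gradF β ⬝ᵥ (α - β) + (α - β) ⬝ᵥ Kl.mulVec (α - β) ≤ F α ∧
      F α ≤ F β + gradF β ⬝ᵥ (α - β) + (α - β) ⬝ᵥ Ku.mulVec (α - β))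
    (αhat : Fin m → ℝ)
    (hmin : ∀ α : Fin m → ℝ, α ≠ αhat → F αhat < F α)
    (Q : (Fin m → ℝ) → (Fin m → ℝ) → ℝ)
    (hQ : ∀ α β : Fin m → ℝ,
      Q α β = F β + gradF β ⬝ᵥ (α - β) + (α - β) ⬝ᵥ Ku.mulVec (α - β))
    (γmin : ℝ)
    (hγ : IsLeast {μ : ℝ | ∃ v : Fin m → ℝ, v ≠ 0 ∧ (Ku⁻¹ * Kl).mulVec v = μ • v} γmin)
    (αk : Fin m → ℝ) (hαk : αk ≠ αhat)
    (Λk : ℝ)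
    (hΛ : Λk = (Q αhat αk - F αhat) / ((αhat - αk) ⬝ᵥ Ku.mulVec (αhat - αk))) :
    Λk ≤ 1 - γmin ∧ 1 - γmin < 1 :=
  mm_contraction_factor_bound_general F gradF Kl Ku hKl hKu hsandwich αhat Q hQ γmin hγ αk hαk Λk hΛ
end

section
/- With the setup of the sandwich quadratic bounds and MM iterates α⁽ᵏ⁺¹⁾ = argmin_α Q(α|α⁽ᵏ⁾), the objective gap contracts: F(α⁽ᵏ⁺¹⁾) - F(α̂) ≤ Λ_k·(F(α⁽ᵏ⁾) - F(α̂)), where Λ_k = (Q(α̂|α⁽ᵏ⁾) - F(α̂)) / ((α̂-α⁽ᵏ⁾)ᵀK_u(α̂-α⁽ᵏ⁾)). -/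
/-!
With `g = ∇F(α)`, the majorizer gives the descent `F(α⁺) ≤ F(α) - ¼ gᵀK⁻¹g` at the MM step.
Writing `G` for the gap `F(α) - F(α̂)`, `d = α̂ - α` and `D = dᵀKd`, one has
`Λ G = (G + gᵀd + D) G / D`, so the claim reduces to `G² + (gᵀd) G + ¼ D gᵀK⁻¹g ≥ 0`. This is
`(G + gᵀd / 2)² ≥ 0` combined with the Cauchy–Schwarz bound `(gᵀd)² ≤ (gᵀK⁻¹g)(dᵀKd)`.
-/

open Matrix

variable {n : Type*} [Fintype n]

theorem Matrix.PosSemidef.sq_dotProduct_mulVec_le {K : Matrix n n ℝ} (hK : K.PosSemidef)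
    (x y : n → ℝ) : (x ⬝ᵥ K *ᵥ y) ^ 2 ≤ (x ⬝ᵥ K *ᵥ x) * (y ⬝ᵥ K *ᵥ y) := by
  classical
  simpa only [toBilin'_apply'] using LinearMap.BilinForm.apply_sq_le_of_symm K.toBilin'
    (fun v => by simpa [toBilin'_apply'] using hK.dotProduct_mulVec_nonneg v)
    (LinearMap.BilinForm.isSymm_iff.mp
      (isSymm_toBilin'_iff_isSymm.mpr (isHermitian_iff_isSymm.mp hK.1))) x y

variable [DecidableEq n]

theorem Matrix.PosDef.sq_dotProduct_le_inv_mul {K : Matrix n n ℝ} (hK : K.PosDef)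
    (g d : n → ℝ) : (g ⬝ᵥ d) ^ 2 ≤ (g ⬝ᵥ K⁻¹ *ᵥ g) * (d ⬝ᵥ K *ᵥ d) := by
  have hKK : K *ᵥ (K⁻¹ *ᵥ g) = g := by
    rw [mulVec_mulVec, mul_nonsing_inv _ hK.det_pos.ne'.isUnit, one_mulVec]
  have hcs := hK.posSemidef.sq_dotProduct_mulVec_le d (K⁻¹ *ᵥ g)
  rwa [hKK, dotProduct_comm (K⁻¹ *ᵥ g), dotProduct_comm d, mul_comm] at hcs

theorem Matrix.dotProduct_add_dotProduct_mulVec_neg_half_inv {K : Matrix n n ℝ}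
    (hK : IsUnit K.det) (g : n → ℝ) :
    g ⬝ᵥ (-(1 / 2 : ℝ) • K⁻¹ *ᵥ g)
        + (-(1 / 2 : ℝ) • K⁻¹ *ᵥ g) ⬝ᵥ K *ᵥ (-(1 / 2 : ℝ) • K⁻¹ *ᵥ g)
      = -(g ⬝ᵥ K⁻¹ *ᵥ g) / 4 := by
  have hKK : K *ᵥ (K⁻¹ *ᵥ g) = g := by
    rw [mulVec_mulVec, mul_nonsing_inv _ hK, one_mulVec]
  simp only [mulVec_smul, hKK, dotProduct_smul, smul_dotProduct, smul_eq_mul,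
    dotProduct_comm (K⁻¹ *ᵥ g) g]
  ring

theorem sub_div_four_le_div_mul {G c D P : ℝ} (hD : 0 < D) (hcs : c ^ 2 ≤ P * D) :
    G - P / 4 ≤ (G + c + D) / D * G := by
  rw [div_mul_eq_mul_div, le_div_iff₀ hD]
  nlinarith [sq_nonneg (2 * G + c)]

theorem mm_objective_gap_contraction_general {m : ℕ} (F : (Fin m → ℝ) → ℝ)
    (gradF : (Fin m → ℝ) → (Fin m → ℝ))
    (Ku : Matrix (Fin m) (Fin m) ℝ) (hKu : Ku.PosDef)
    (Q : (Fin m → ℝ) → (Fin m → ℝ) → ℝ)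
    (hQ : ∀ α β : Fin m → ℝ,
      Q α β = F β + gradF β ⬝ᵥ (α - β) + (α - β) ⬝ᵥ Ku.mulVec (α - β))
    (hmaj : ∀ α β : Fin m → ℝ, F α ≤ Q α β)
    (αhat : Fin m → ℝ)
    (a : ℕ → (Fin m → ℝ))
    (hupd : ∀ k : ℕ, a (k + 1) = a k - (1 / 2 : ℝ) • Ku⁻¹.mulVec (gradF (a k)))
    (Λ : ℕ → ℝ)
    (hΛ : ∀ k : ℕ,
      Λ k = (Q αhat (a k) - F αhat) / ((αhat - a k) ⬝ᵥ Ku.mulVec (αhat - a k))) :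
    ∀ k : ℕ, F (a (k + 1)) - F αhat ≤ Λ k * (F (a k) - F αhat) := by
  intro k
  have hmaj_next := hmaj (a (k + 1)) (a k)
  set g := gradF (a k)
  set d := αhat - a k
  have hstep : a (k + 1) - a k = -(1 / 2 : ℝ) • Ku⁻¹ *ᵥ g := by
    rw [hupd k, sub_sub_cancel_left, neg_smul]
  have hdescent : F (a (k + 1)) ≤ F (a k) - (g ⬝ᵥ Ku⁻¹ *ᵥ g) / 4 := by
    rw [hQ, hstep, add_assoc,
      dotProduct_add_dotProduct_mulVec_neg_half_inv hKu.det_pos.ne'.isUnit] at hmaj_next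
    linarith
  rcases eq_or_ne d 0 with hd | hd
  · have hP : 0 ≤ g ⬝ᵥ Ku⁻¹ *ᵥ g := by
      simpa using hKu.inv.posSemidef.dotProduct_mulVec_nonneg g
    rw [(sub_eq_zero.mp hd).symm] at hdescent ⊢
    rw [sub_self, mul_zero]
    linarith
  · have hΛk : Λ k = (F (a k) - F αhat + g ⬝ᵥ d + d ⬝ᵥ Ku *ᵥ d) / (d ⬝ᵥ Ku *ᵥ d) := by
      rw [hΛ k, hQ]
      ring
    calc F (a (k + 1)) - F αhat ≤ F (a k) - F αhat - (g ⬝ᵥ Ku⁻¹ *ᵥ g) / 4 := by linarith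
      _ ≤ Λ k * (F (a k) - F αhat) := by
        rw [hΛk]
        exact sub_div_four_le_div_mul (hKu.dotProduct_mulVec_pos hd)
          (hKu.sq_dotProduct_le_inv_mul g d)

theorem mm_objective_gap_contraction {m : ℕ} (F : (Fin m → ℝ) → ℝ)
    (hF : Differentiable ℝ F)
    (gradF : (Fin m → ℝ) → (Fin m → ℝ))
    (hgrad : ∀ β v : Fin m → ℝ, fderiv ℝ F β v = gradF β ⬝ᵥ v)
    (Ku : Matrix (Fin m) (Fin m) ℝ) (hKu : Ku.PosDef)
    (Q : (Fin m → ℝ) → (Fin m → ℝ) → ℝ)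
    (hQ : ∀ α β : Fin m → ℝ,
      Q α β = F β + gradF β ⬝ᵥ (α - β) + (α - β) ⬝ᵥ Ku.mulVec (α - β))
    (hmaj : ∀ α β : Fin m → ℝ, F α ≤ Q α β)
    (αhat : Fin m → ℝ)
    (hmin : ∀ α : Fin m → ℝ, α ≠ αhat → F αhat < F α)
    (a : ℕ → (Fin m → ℝ))
    (hupd : ∀ k : ℕ, a (k + 1) = a k - (1 / 2 : ℝ) • Ku⁻¹.mulVec (gradF (a k)))
    (Λ : ℕ → ℝ)
    (hΛ : ∀ k : ℕ,
      Λ k = (Q αhat (a k) - F αhat) / ((αhat - a k) ⬝ᵥ Ku.mulVec (αhat - a k))) :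
    ∀ k : ℕ, F (a (k + 1)) - F αhat ≤ Λ k * (F (a k) - F αhat) :=
  mm_objective_gap_contraction_general F gradF Ku hKu Q hQ hmaj αhat a hupd Λ hΛ
end

section
/- Under the sandwich quadratic bounds with positive definite K_l and K_u, setting Γ = 1 - γ_min(K_u⁻¹K_l), the MM iterates satisfy the linear rate ‖α⁽ᵏ⁺¹⁾ - α̂‖ ≤ √(Γ·γ_max(K_u)/γ_min(K_l)) · ‖α⁽ᵏ⁾ - α̂‖. -/
/-! Each MM step minimises the quadratic majoriser of `F` at the current iterate `p`, so it does at
least as well as the step `γ (α̂ - p)` with `γ = γ_min(K_u⁻¹K_l)`. Because `γ K_u ≤ K_l`, the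
lower bound at `p` then gives `F(α⁽ᵏ⁺¹⁾) - F(α̂) ≤ Γ (F(α⁽ᵏ⁾) - F(α̂))`. Since `∇F(α̂) = 0`, the
sandwich at `α̂` traps `F - F(α̂)` between the `K_l`- and `K_u`-quadratic forms of `α - α̂`, and
Rayleigh's bounds compare those with `γ_min(K_l) ‖α - α̂‖²` and `γ_max(K_u) ‖α - α̂‖²`. -/

open Matrix
open scoped MatrixOrder

variable {n : Type*} [Fintype n]

namespace Matrix

lemma dotProduct_mulVec_le_of_le {A B : Matrix n n ℝ} (h : A ≤ B) (v : n → ℝ) :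
    v ⬝ᵥ A *ᵥ v ≤ v ⬝ᵥ B *ᵥ v := by
  have := (le_iff.mp h).dotProduct_mulVec_nonneg v
  rwa [star_trivial, sub_mulVec, dotProduct_sub, sub_nonneg] at this

lemma dotProduct_algebraMap_mulVec [DecidableEq n] (c : ℝ) (v : n → ℝ) :
    v ⬝ᵥ algebraMap ℝ (Matrix n n ℝ) c *ᵥ v = c * (v ⬝ᵥ v) := by
  rw [Algebra.algebraMap_eq_smul_one, smul_mulVec, one_mulVec, dotProduct_smul, smul_eq_mul]

namespace IsHermitian

variable [DecidableEq n] {A : Matrix n n ℝ} (hA : A.IsHermitian)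

lemma algebraMap_le_of_le_eigenvalues {c : ℝ} (hc : ∀ i, c ≤ hA.eigenvalues i) :
    algebraMap ℝ _ c ≤ A := by
  rw [algebraMap_le_iff_le_spectrum hA.isSelfAdjoint, hA.spectrum_real_eq_range_eigenvalues]
  rintro _ ⟨i, rfl⟩
  exact hc i

lemma le_algebraMap_of_eigenvalues_le {c : ℝ} (hc : ∀ i, hA.eigenvalues i ≤ c) :
    A ≤ algebraMap ℝ _ c := by
  rw [le_algebraMap_iff_spectrum_le hA.isSelfAdjoint, hA.spectrum_real_eq_range_eigenvalues]
  rintro _ ⟨i, rfl⟩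
  exact hc i

lemma iInf_eigenvalues_mul_le (v : n → ℝ) :
    (⨅ i, hA.eigenvalues i) * (v ⬝ᵥ v) ≤ v ⬝ᵥ A *ᵥ v := by
  rw [← dotProduct_algebraMap_mulVec]
  exact dotProduct_mulVec_le_of_le
    (hA.algebraMap_le_of_le_eigenvalues fun i ↦ ciInf_le (Finite.bddBelow_range _) i) v

lemma le_iSup_eigenvalues_mul (v : n → ℝ) :
    v ⬝ᵥ A *ᵥ v ≤ (⨆ i, hA.eigenvalues i) * (v ⬝ᵥ v) := by
  rw [← dotProduct_algebraMap_mulVec]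
  exact dotProduct_mulVec_le_of_le
    (hA.le_algebraMap_of_eigenvalues_le fun i ↦ le_ciSup (Finite.bddAbove_range _) i) v

end IsHermitian

lemma PosDef.iInf_eigenvalues_pos [DecidableEq n] [Nonempty n] {A : Matrix n n ℝ}
    (hA : A.PosDef) :
    0 < ⨅ i, hA.isHermitian.eigenvalues i := by
  obtain ⟨i, hi⟩ := exists_eq_ciInf_of_finite (f := hA.isHermitian.eigenvalues)
  exact hi ▸ hA.eigenvalues_pos i

/-- `S⁻¹ K_l S⁻¹` with `S = √K_u` is similar to `K_u⁻¹ K_l`, so its eigenvalues are at least `γ`;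
conjugating `γ ≤ S⁻¹ K_l S⁻¹` by `S` gives the claim. -/
lemma PosDef.smul_le_of_mem_lowerBounds [DecidableEq n] {Kl Ku : Matrix n n ℝ}
    (hKl : Kl.IsHermitian) (hKu : Ku.PosDef) {γ : ℝ}
    (hγ : γ ∈ lowerBounds {μ : ℝ | ∃ v : n → ℝ, v ≠ 0 ∧ (Ku⁻¹ * Kl) *ᵥ v = μ • v}) :
    γ • Ku ≤ Kl := by
  set S := CFC.sqrt Ku
  have hSS : S * S = Ku := CFC.sqrt_mul_sqrt_self Ku hKu.posSemidef.nonneg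
  have hS : IsUnit S.det :=
    (isUnit_iff_isUnit_det S).mp (IsUnit.mul_iff.mp (hSS ▸ hKu.isUnit)).1
  have hSinv : (S⁻¹)ᴴ = S⁻¹ := by
    rw [conjTranspose_nonsing_inv, (CFC.sqrt_nonneg Ku).posSemidef.isHermitian.eq]
  set M := S⁻¹ * Kl * S⁻¹
  have hM : M.IsHermitian := by
    simpa only [hSinv] using isHermitian_conjTranspose_mul_mul S⁻¹ hKl
  have hγM : algebraMap ℝ _ γ ≤ M := by
    refine hM.algebraMap_le_of_le_eigenvalues fun i ↦ hγ ⟨S⁻¹ *ᵥ hM.eigenvectorBasis i, ?_, ?_⟩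
    · intro h
      apply hM.eigenvectorBasis.orthonormal.ne_zero i
      have := congrArg (S *ᵥ ·) h
      simp only [mulVec_mulVec, mul_nonsing_inv S hS, one_mulVec, mulVec_zero] at this
      exact congrArg (WithLp.toLp 2) this
    · rw [mulVec_mulVec, ← hSS, Matrix.mul_inv_rev, ← mulVec_smul, ← hM.mulVec_eigenvectorBasis,
        mulVec_mulVec]
      simp only [M, Matrix.mul_assoc]
  calc γ • Ku = S * algebraMap ℝ _ γ * S := by
        rw [Algebra.algebraMap_eq_smul_one, mul_smul_comm, smul_mul_assoc, mul_one, hSS]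
    _ ≤ S * M * S := conjugate_le_conjugate_of_nonneg hγM (CFC.sqrt_nonneg Ku)
    _ = Kl := by
        simp only [M, ← Matrix.mul_assoc, mul_nonsing_inv S hS, Matrix.one_mul]
        rw [Matrix.mul_assoc, nonsing_inv_mul S hS, Matrix.mul_one]

lemma PosDef.isMinOn_dotProduct_add_dotProduct_mulVec [DecidableEq n] {K : Matrix n n ℝ}
    (hK : K.PosDef) (g : n → ℝ) :
    IsMinOn (fun e ↦ g ⬝ᵥ e + e ⬝ᵥ K *ᵥ e) Set.univ (-(1 / 2 : ℝ) • K⁻¹ *ᵥ g) := by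
  set d := -(1 / 2 : ℝ) • K⁻¹ *ᵥ g
  have hg (e : n → ℝ) : g ⬝ᵥ e = -2 * (e ⬝ᵥ K *ᵥ d) := by
    rw [mulVec_smul, mulVec_mulVec, mul_nonsing_inv K ((isUnit_iff_isUnit_det K).mp hK.isUnit),
      one_mulVec, dotProduct_smul, smul_eq_mul, dotProduct_comm]
    ring
  have hsymm (e : n → ℝ) : d ⬝ᵥ K *ᵥ e = e ⬝ᵥ K *ᵥ d := by
    rw [dotProduct_mulVec, ← mulVec_transpose, (isHermitian_iff_isSymm.mp hK.isHermitian).eq,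
      dotProduct_comm]
  intro e _
  -- completing the square: the gap at `e` is `(e - d) ⬝ᵥ K *ᵥ (e - d)`
  have := hK.posSemidef.dotProduct_mulVec_nonneg (e - d)
  simp only [star_trivial, mulVec_sub, dotProduct_sub, sub_dotProduct, hsymm] at this
  simp only [Set.mem_ofPred_eq, hg]
  linarith

lemma PosDef.mem_Ioc_of_inv_mul_mulVec_eq_smul [DecidableEq n] {Kl Ku : Matrix n n ℝ}
    (hKl : Kl.PosDef) (hKu : Ku.PosDef) (hle : ∀ u, u ⬝ᵥ Kl *ᵥ u ≤ u ⬝ᵥ Ku *ᵥ u)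
    {v : n → ℝ} (hv : v ≠ 0) {μ : ℝ} (hμ : (Ku⁻¹ * Kl) *ᵥ v = μ • v) : μ ∈ Set.Ioc 0 1 := by
  have hKlv : Kl *ᵥ v = μ • Ku *ᵥ v := by
    rw [← mulVec_smul, ← hμ, mulVec_mulVec, ← Matrix.mul_assoc,
      mul_nonsing_inv Ku ((isUnit_iff_isUnit_det Ku).mp hKu.isUnit), Matrix.one_mul]
  have hKlq : v ⬝ᵥ Kl *ᵥ v = μ * (v ⬝ᵥ Ku *ᵥ v) := by
    rw [hKlv, dotProduct_smul, smul_eq_mul]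
  have hKl_pos : 0 < v ⬝ᵥ Kl *ᵥ v := by simpa using hKl.dotProduct_mulVec_pos hv
  have hKu_pos : 0 < v ⬝ᵥ Ku *ᵥ v := by simpa using hKu.dotProduct_mulVec_pos hv
  have hle_v := hle v
  rw [hKlq] at hKl_pos hle_v
  exact ⟨pos_of_mul_pos_left hKl_pos hKu_pos.le,
    (mul_le_iff_le_one_left hKu_pos).mp (by linarith)⟩

end Matrix

noncomputable def mmStep [DecidableEq n] (Ku : Matrix n n ℝ) (gradF : (n → ℝ) → n → ℝ)
    (p : n → ℝ) : n → ℝ :=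
  p - (1 / 2 : ℝ) • Ku⁻¹ *ᵥ gradF p

def QuadraticSandwich (F : (n → ℝ) → ℝ) (gradF : (n → ℝ) → n → ℝ) (Kl Ku : Matrix n n ℝ) :
    Prop :=
  ∀ α β : n → ℝ,
    F β + gradF β ⬝ᵥ (α - β) + (α - β) ⬝ᵥ Kl *ᵥ (α - β) ≤ F α ∧
    F α ≤ F β + gradF β ⬝ᵥ (α - β) + (α - β) ⬝ᵥ Ku *ᵥ (α - β)

namespace QuadraticSandwich

variable {F : (n → ℝ) → ℝ} {gradF : (n → ℝ) → n → ℝ} {Kl Ku : Matrix n n ℝ}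

lemma dotProduct_mulVec_le (h : QuadraticSandwich F gradF Kl Ku) (u : n → ℝ) :
    u ⬝ᵥ Kl *ᵥ u ≤ u ⬝ᵥ Ku *ᵥ u := by
  have := h u 0
  simp only [sub_zero] at this
  linarith [this.1, this.2]

lemma dotProduct_mulVec_le_sub (h : QuadraticSandwich F gradF Kl Ku) {z : n → ℝ}
    (hz : gradF z = 0) (α : n → ℝ) :
    (α - z) ⬝ᵥ Kl *ᵥ (α - z) ≤ F α - F z := by
  have := (h α z).1
  rw [hz, zero_dotProduct] at this
  linarith

lemma sub_le_dotProduct_mulVec (h : QuadraticSandwich F gradF Kl Ku) {z : n → ℝ}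
    (hz : gradF z = 0) (α : n → ℝ) :
    F α - F z ≤ (α - z) ⬝ᵥ Ku *ᵥ (α - z) := by
  have := (h α z).2
  rw [hz, zero_dotProduct] at this
  linarith

lemma apply_mmStep_le [DecidableEq n] (h : QuadraticSandwich F gradF Kl Ku) (hKu : Ku.PosDef)
    (p e : n → ℝ) :
    F (mmStep Ku gradF p) ≤ F p + gradF p ⬝ᵥ e + e ⬝ᵥ Ku *ᵥ e := by
  have hstep : mmStep Ku gradF p - p = -(1 / 2 : ℝ) • Ku⁻¹ *ᵥ gradF p := by
    rw [mmStep, neg_smul]; abel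
  have hmin := isMinOn_univ_iff.mp (hKu.isMinOn_dotProduct_add_dotProduct_mulVec (gradF p)) e
  have := (h (mmStep Ku gradF p) p).2
  rw [hstep] at this
  linarith

lemma apply_mmStep_le_convex_combination [DecidableEq n] (h : QuadraticSandwich F gradF Kl Ku)
    (hKu : Ku.PosDef) {γ : ℝ} (hγ0 : 0 ≤ γ) (hγ : γ • Ku ≤ Kl) (p z : n → ℝ) :
    F (mmStep Ku gradF p) ≤ (1 - γ) * F p + γ * F z := by
  have hmaj := h.apply_mmStep_le hKu p (γ • (z - p))
  have hmin := (h z p).1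
  have hγKu := dotProduct_mulVec_le_of_le hγ (z - p)
  simp only [dotProduct_smul, smul_dotProduct, mulVec_smul, smul_mulVec, smul_eq_mul]
    at hmaj hγKu
  nlinarith [mul_le_mul_of_nonneg_left hγKu hγ0]

end QuadraticSandwich

lemma Real.sqrt_le_sqrt_div_mul_sqrt {a b x y : ℝ} (ha : 0 < a) (hy : 0 ≤ y)
    (h : a * x ≤ b * y) :
    √x ≤ √(b / a) * √y := by
  rw [← Real.sqrt_mul' _ hy]
  refine Real.sqrt_le_sqrt ?_
  rw [div_mul_eq_mul_div, le_div_iff₀ ha]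
  linarith

lemma sum_sub_sq_eq_dotProduct (x y : n → ℝ) : ∑ i, (x i - y i) ^ 2 = (x - y) ⬝ᵥ (x - y) := by
  simp only [dotProduct, Pi.sub_apply, sq]

theorem mm_linear_rate_general {m : ℕ} (F : (Fin m → ℝ) → ℝ)
    (gradF : (Fin m → ℝ) → (Fin m → ℝ))
    (Kl Ku : Matrix (Fin m) (Fin m) ℝ) (hKl : Kl.PosDef) (hKu : Ku.PosDef)
    (hsandwich : ∀ α β : Fin m → ℝ,
      F β + gradF β ⬝ᵥ (α - β) + (α - β) ⬝ᵥ Kl.mulVec (α - β) ≤ F α ∧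
      F α ≤ F β + gradF β ⬝ᵥ (α - β) + (α - β) ⬝ᵥ Ku.mulVec (α - β))
    (αhat : Fin m → ℝ) (hgradhat : gradF αhat = 0)
    (a : ℕ → (Fin m → ℝ))
    (hupd : ∀ k : ℕ, a (k + 1) = a k - (1 / 2 : ℝ) • Ku⁻¹.mulVec (gradF (a k)))
    (γmin : ℝ)
    (hγ : IsLeast {μ : ℝ | ∃ v : Fin m → ℝ, v ≠ 0 ∧ (Ku⁻¹ * Kl).mulVec v = μ • v} γmin)
    (Γ : ℝ) (hΓ : Γ = 1 - γmin) :
    ∀ k : ℕ,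
      Real.sqrt (∑ i, (a (k + 1) i - αhat i) ^ 2)
        ≤ Real.sqrt (Γ * (⨆ i, hKu.isHermitian.eigenvalues i)
              / (⨅ i, hKl.isHermitian.eigenvalues i))
          * Real.sqrt (∑ i, (a k i - αhat i) ^ 2) := by
  have hF : QuadraticSandwich F gradF Kl Ku := hsandwich
  obtain ⟨v, hv0, hv⟩ := hγ.1
  obtain ⟨i₀, -⟩ := Function.ne_iff.mp hv0
  have : Nonempty (Fin m) := ⟨i₀⟩
  obtain ⟨hγ0, hγ1⟩ := hKl.mem_Ioc_of_inv_mul_mulVec_eq_smul hKu hF.dotProduct_mulVec_le hv0 hv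
  have hγKu := hKu.smul_le_of_mem_lowerBounds hKl.isHermitian hγ.2
  have hΓ0 : 0 ≤ Γ := by linarith
  intro k
  have hgap : F (a (k + 1)) - F αhat ≤ Γ * (F (a k) - F αhat) := by
    have hstep : a (k + 1) = mmStep Ku gradF (a k) := hupd k
    have := hF.apply_mmStep_le_convex_combination hKu hγ0.le hγKu (a k) αhat
    rw [hstep, hΓ]
    linarith
  have hdist : 0 ≤ (a k - αhat) ⬝ᵥ (a k - αhat) := by
    simpa using dotProduct_self_star_nonneg (a k - αhat)
  rw [sum_sub_sq_eq_dotProduct, sum_sub_sq_eq_dotProduct]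
  refine Real.sqrt_le_sqrt_div_mul_sqrt hKl.iInf_eigenvalues_pos hdist ?_
  calc _ ≤ (a (k + 1) - αhat) ⬝ᵥ Kl *ᵥ (a (k + 1) - αhat) :=
        hKl.isHermitian.iInf_eigenvalues_mul_le _
    _ ≤ F (a (k + 1)) - F αhat := hF.dotProduct_mulVec_le_sub hgradhat _
    _ ≤ Γ * (F (a k) - F αhat) := hgap
    _ ≤ Γ * ((a k - αhat) ⬝ᵥ Ku *ᵥ (a k - αhat)) := by
      gcongr; exact hF.sub_le_dotProduct_mulVec hgradhat _
    _ ≤ Γ * ((⨆ i, hKu.isHermitian.eigenvalues i) * ((a k - αhat) ⬝ᵥ (a k - αhat))) := by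
      gcongr; exact hKu.isHermitian.le_iSup_eigenvalues_mul _
    _ = _ := by ring

theorem mm_linear_rate {m : ℕ} (F : (Fin m → ℝ) → ℝ)
    (hF : Differentiable ℝ F)
    (gradF : (Fin m → ℝ) → (Fin m → ℝ))
    (hgrad : ∀ β v : Fin m → ℝ, fderiv ℝ F β v = gradF β ⬝ᵥ v)
    (Kl Ku : Matrix (Fin m) (Fin m) ℝ) (hKl : Kl.PosDef) (hKu : Ku.PosDef)
    (hsandwich : ∀ α β : Fin m → ℝ,
      F β + gradF β ⬝ᵥ (α - β) + (α - β) ⬝ᵥ Kl.mulVec (α - β) ≤ F α ∧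
      F α ≤ F β + gradF β ⬝ᵥ (α - β) + (α - β) ⬝ᵥ Ku.mulVec (α - β))
    (αhat : Fin m → ℝ) (hgradhat : gradF αhat = 0)
    (hmin : ∀ α : Fin m → ℝ, α ≠ αhat → F αhat < F α)
    (a : ℕ → (Fin m → ℝ))
    (hupd : ∀ k : ℕ, a (k + 1) = a k - (1 / 2 : ℝ) • Ku⁻¹.mulVec (gradF (a k)))
    (γmin : ℝ)
    (hγ : IsLeast {μ : ℝ | ∃ v : Fin m → ℝ, v ≠ 0 ∧ (Ku⁻¹ * Kl).mulVec v = μ • v} γmin)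
    (Γ : ℝ) (hΓ : Γ = 1 - γmin) :
    ∀ k : ℕ,
      Real.sqrt (∑ i, (a (k + 1) i - αhat i) ^ 2)
        ≤ Real.sqrt (Γ * (⨆ i, hKu.isHermitian.eigenvalues i)
              / (⨅ i, hKl.isHermitian.eigenvalues i))
          * Real.sqrt (∑ i, (a k i - αhat i) ^ 2) :=
  mm_linear_rate_general F gradF Kl Ku hKl hKu hsandwich αhat hgradhat a hupd γmin hγ Γ hΓ
end
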